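/- arXiv:2004.03119 — 7 statements merged into one kernel-verified Lean document; each statement's English description precedes it below -/
import Mathlib

section
/- Let n, d, T, γ be positive integers with d ≤ n. Let θ be any function assigning to each d-element subset S of {1,…,n} a subset θ(S) of {1,…,T} (the set of positive tests) such that |θ(S)| ≤ γ·d for every such S. Then for every function ψ from subsets of {1,…,T} to subsets of {1,…,n}, the number of d-element subsets S of {1,…,n} satisfying ψ(θ(S)) = S is at most ∑_{i=0}^{γd} C(T,i). Consequently, if S is drawn uniformly at random among all d-element subsets of {1,…,n}, then the probability that ψ(θ(S)) = S is at most (∑_{i=0}^{γd} C(T,i)) / C(n,d). -/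
/-- Counting-based bound for sparsity-constrained group testing (γ-divisible items):
any decoding map can correctly recover at most `∑_{i=0}^{γd} C(T,i)` of the
`d`-element defective sets, hence the uniform success probability is at most
`(∑_{i=0}^{γd} C(T,i)) / C(n,d)`. -/
theorem counting_bound_gamma_divisible
    (n d T γ : ℕ) (hn : 0 < n) (hd : 0 < d) (hT : 0 < T) (hγ : 0 < γ) (hdn : d ≤ n)
    (θ : Finset (Fin n) → Finset (Fin T))
    (hθ : ∀ S : Finset (Fin n), S.card = d → (θ S).card ≤ γ * d)
    (ψ : Finset (Fin T) → Finset (Fin n)) :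
    ((Finset.powersetCard d (Finset.univ : Finset (Fin n))).filter
        (fun S => ψ (θ S) = S)).card
      ≤ ∑ i ∈ Finset.range (γ * d + 1), T.choose i ∧
    (((Finset.powersetCard d (Finset.univ : Finset (Fin n))).filter
        (fun S => ψ (θ S) = S)).card : ℝ) / (n.choose d : ℝ)
      ≤ (∑ i ∈ Finset.range (γ * d + 1), (T.choose i : ℝ)) / (n.choose d : ℝ) := by
  have h1 : ((Finset.powersetCard d (Finset.univ : Finset (Fin n))).filter
        (fun S => ψ (θ S) = S)).card
      ≤ ∑ i ∈ Finset.range (γ * d + 1), T.choose i := by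
    have hmap : ∀ S ∈ (Finset.powersetCard d (Finset.univ : Finset (Fin n))).filter
        (fun S => ψ (θ S) = S),
        θ S ∈ (Finset.range (γ * d + 1)).biUnion
          (fun i => Finset.powersetCard i (Finset.univ : Finset (Fin T))) := by
      intro S hS
      simp only [Finset.mem_filter, Finset.mem_powersetCard] at hS
      simp only [Finset.mem_biUnion, Finset.mem_range, Finset.mem_powersetCard]
      exact ⟨(θ S).card, Nat.lt_succ_of_le (hθ S hS.1.2), Finset.subset_univ _, rfl⟩
    have hinj : Set.InjOn θ ((Finset.powersetCard d (Finset.univ : Finset (Fin n))).filter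
        (fun S => ψ (θ S) = S)) := by
      intro a ha b hb hab
      simp only [Finset.coe_filter, Set.mem_setOf_eq] at ha hb
      rw [← ha.2, ← hb.2, hab]
    calc ((Finset.powersetCard d (Finset.univ : Finset (Fin n))).filter
        (fun S => ψ (θ S) = S)).card
        ≤ ((Finset.range (γ * d + 1)).biUnion
          (fun i => Finset.powersetCard i (Finset.univ : Finset (Fin T)))).card :=
          Finset.card_le_card_of_injOn θ hmap hinj
      _ ≤ ∑ i ∈ Finset.range (γ * d + 1),
            (Finset.powersetCard i (Finset.univ : Finset (Fin T))).card :=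
          Finset.card_biUnion_le
      _ = ∑ i ∈ Finset.range (γ * d + 1), T.choose i := by
          simp [Finset.card_powersetCard]
  refine ⟨h1, ?_⟩
  gcongr
  exact_mod_cast h1
end

section
/- Let n, d, T, γ be positive integers with d ≤ n and 1 ≤ γ·d ≤ T, and let δ ∈ (0,1]. Let θ be any function assigning to each d-element subset S of {1,…,n} a subset θ(S) of {1,…,T} with |θ(S)| ≤ γ·d, and let ψ be any function from subsets of {1,…,T} to subsets of {1,…,n}. If the number of d-element subsets S with ψ(θ(S)) = S is at least δ·C(n,d), then T ≥ e^{-1}·γ·d·δ^{1/(γd)}·(n/d)^{1/γ}. -/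
open Finset in
lemma aux_pow_le_choose_mul_pow (n d : ℕ) (hdn : d ≤ n) :
    n ^ d ≤ n.choose d * d ^ d := by
  have key : d.factorial * n ^ d ≤ n.descFactorial d * d ^ d := by
    rw [← Finset.prod_range_add_one_eq_factorial, Nat.descFactorial_eq_prod_range,
      pow_eq_prod_const, pow_eq_prod_const, ← Finset.prod_mul_distrib,
      ← Finset.prod_mul_distrib]
    rw [← Finset.prod_range_reflect (fun i => (i + 1) * n) d]
    apply Finset.prod_le_prod' ?_
    intro i hi
    have hid : i < d := Finset.mem_range.mp hi
    have : d - 1 - i + 1 = d - i := by omega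
    rw [this, Nat.sub_mul, Nat.sub_mul]
    have h1 : d * n ≤ n * d := le_of_eq (Nat.mul_comm d n)
    calc d * n - i * n ≤ n * d - i * n := Nat.sub_le_sub_right h1 _
      _ ≤ n * d - i * d := Nat.sub_le_sub_left (Nat.mul_le_mul_left i hdn) _
  rw [Nat.descFactorial_eq_factorial_mul_choose, Nat.mul_assoc] at key
  exact Nat.le_of_mul_le_mul_left (by rw [Nat.mul_comm (n.choose d)] at key ⊢; exact key) d.factorial_pos

open Finset in
lemma aux_sum_choose_le (T k : ℕ) (hk : 1 ≤ k) (hkT : k ≤ T) :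
    (∑ i ∈ range (k + 1), (T.choose i : ℝ)) ≤ (Real.exp 1 * T / k) ^ k := by
  have hT : (0 : ℝ) < T := by exact_mod_cast hk.trans hkT
  have hk0 : (0 : ℝ) < k := by exact_mod_cast hk
  set x : ℝ := k / T with hx
  have hx0 : 0 < x := by positivity
  have hx1 : x ≤ 1 := by
    rw [hx, div_le_one hT]; exact_mod_cast hkT
  have step1 : x ^ k * (∑ i ∈ range (k + 1), (T.choose i : ℝ)) ≤
      ∑ i ∈ range (k + 1), x ^ i * (T.choose i : ℝ) := by
    rw [Finset.mul_sum]
    apply Finset.sum_le_sum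
    intro i hi
    have : x ^ k ≤ x ^ i := pow_le_pow_of_le_one hx0.le hx1 (Nat.lt_succ_iff.mp (Finset.mem_range.mp hi))
    exact mul_le_mul_of_nonneg_right this (by positivity)
  have step2 : (∑ i ∈ range (k + 1), x ^ i * (T.choose i : ℝ)) ≤
      ∑ i ∈ range (T + 1), x ^ i * (T.choose i : ℝ) := by
    apply Finset.sum_le_sum_of_subset_of_nonneg
    · exact Finset.range_subset_range.mpr (by omega)
    · intro i _ _; positivity
  have step3 : (∑ i ∈ range (T + 1), x ^ i * (T.choose i : ℝ)) = (x + 1) ^ T := by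
    rw [add_pow]
    apply Finset.sum_congr rfl
    intro i _; ring
  have step4 : (x + 1) ^ T ≤ Real.exp 1 ^ k := by
    have h1 : (x + 1) ^ T ≤ Real.exp x ^ T :=
      pow_le_pow_left₀ (by positivity) (Real.add_one_le_exp x) T
    have h2 : Real.exp x ^ T = Real.exp (x * T) := by
      rw [← Real.exp_nat_mul, mul_comm]
    have h3 : x * T = k := by rw [hx]; field_simp
    rw [h2, h3] at h1
    calc (x + 1) ^ T ≤ Real.exp k := h1
      _ = Real.exp 1 ^ k := by rw [← Real.exp_nat_mul, mul_one]
  have hxk : (0:ℝ) < x ^ k := by positivity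
  have : (∑ i ∈ range (k + 1), (T.choose i : ℝ)) ≤ Real.exp 1 ^ k / x ^ k := by
    rw [le_div_iff₀ hxk, mul_comm]
    exact step1.trans (step2.trans (step3 ▸ step4))
  calc (∑ i ∈ range (k + 1), (T.choose i : ℝ)) ≤ Real.exp 1 ^ k / x ^ k := this
    _ = (Real.exp 1 * T / k) ^ k := by
        rw [hx, div_pow, div_pow, mul_pow]
        rw [div_div_eq_mul_div]

/-- Non-asymptotic converse for group testing with γ-divisible items: if a decoder
correctly recovers at least a fraction `δ` of the `d`-element defective sets, then
`T ≥ e⁻¹ · γd · δ^{1/(γd)} · (n/d)^{1/γ}`. -/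
theorem nonasymptotic_converse_gamma_divisible
    (n d T γ : ℕ) (hn : 0 < n) (hd : 0 < d) (hT : 0 < T) (hγ : 0 < γ) (hdn : d ≤ n)
    (hγdT : 1 ≤ γ * d ∧ γ * d ≤ T)
    (δ : ℝ) (hδ : 0 < δ ∧ δ ≤ 1)
    (θ : Finset (Fin n) → Finset (Fin T))
    (hθ : ∀ S : Finset (Fin n), S.card = d → (θ S).card ≤ γ * d)
    (ψ : Finset (Fin T) → Finset (Fin n))
    (hsuc : δ * (n.choose d : ℝ) ≤
      (((Finset.powersetCard d (Finset.univ : Finset (Fin n))).filter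
        (fun S => ψ (θ S) = S)).card : ℝ)) :
    (Real.exp 1)⁻¹ * (γ * d : ℝ) * δ ^ ((1 : ℝ) / (γ * d : ℝ)) *
        ((n : ℝ) / (d : ℝ)) ^ ((1 : ℝ) / (γ : ℝ)) ≤ (T : ℝ) := by
  obtain ⟨hk1, hkT⟩ := hγdT
  obtain ⟨hδ0, hδ1⟩ := hδ
  set k := γ * d with hkdef
  -- counting: card of correct sets ≤ ∑_{i ≤ k} C(T,i)
  set F := ((Finset.powersetCard d (Finset.univ : Finset (Fin n))).filter
      (fun S => ψ (θ S) = S)) with hF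
  have hcount : (F.card : ℝ) ≤ ∑ i ∈ Finset.range (k + 1), (T.choose i : ℝ) := by
    have hinj : ∀ S₁ ∈ F, ∀ S₂ ∈ F, θ S₁ = θ S₂ → S₁ = S₂ := by
      intro S₁ h₁ S₂ h₂ he
      have e₁ := (Finset.mem_filter.mp h₁).2
      have e₂ := (Finset.mem_filter.mp h₂).2
      rw [← e₁, ← e₂, he]
    have hmaps : ∀ S ∈ F, θ S ∈ (Finset.range (k + 1)).biUnion
        (fun i => Finset.powersetCard i (Finset.univ : Finset (Fin T))) := by
      intro S hS
      have hScard : S.card = d := by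
        have := (Finset.mem_filter.mp hS).1
        exact (Finset.mem_powersetCard.mp this).2
      have := hθ S hScard
      apply Finset.mem_biUnion.mpr
      exact ⟨(θ S).card, Finset.mem_range.mpr (by omega),
        Finset.mem_powersetCard.mpr ⟨Finset.subset_univ _, rfl⟩⟩
    have hle : F.card ≤ ((Finset.range (k + 1)).biUnion
        (fun i => Finset.powersetCard i (Finset.univ : Finset (Fin T)))).card :=
      Finset.card_le_card_of_injOn θ hmaps hinj
    have hle2 : ((Finset.range (k + 1)).biUnion
        (fun i => Finset.powersetCard i (Finset.univ : Finset (Fin T)))).card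
        ≤ ∑ i ∈ Finset.range (k + 1), T.choose i := by
      refine (Finset.card_biUnion_le).trans ?_
      apply le_of_eq
      apply Finset.sum_congr rfl
      intro i _
      rw [Finset.card_powersetCard, Finset.card_univ, Fintype.card_fin]
    exact_mod_cast hle.trans hle2
  have hsum := aux_sum_choose_le T k hk1 hkT
  -- binomial lower bound
  have hchoose : ((n : ℝ) / d) ^ d ≤ (n.choose d : ℝ) := by
    have := aux_pow_le_choose_mul_pow n d hdn
    have hcast : ((n : ℝ)) ^ d ≤ (n.choose d : ℝ) * (d : ℝ) ^ d := by exact_mod_cast this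
    rw [div_pow, div_le_iff₀ (by positivity)]
    exact hcast
  -- chain
  have hk0 : (0 : ℝ) < (k : ℝ) := by exact_mod_cast hk1
  have hnd0 : (0 : ℝ) < (n : ℝ) / d := by positivity
  have hchain : δ * ((n : ℝ) / d) ^ d ≤ (Real.exp 1 * T / k) ^ k := by
    calc δ * ((n : ℝ) / d) ^ d ≤ δ * (n.choose d : ℝ) :=
          mul_le_mul_of_nonneg_left hchoose hδ0.le
      _ ≤ (F.card : ℝ) := hsuc
      _ ≤ _ := hcount.trans hsum
  -- take k-th root
  have hbase0 : (0 : ℝ) ≤ Real.exp 1 * T / k := by positivity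
  have hlhs0 : (0 : ℝ) ≤ δ * ((n : ℝ) / d) ^ d := by positivity
  have hroot : (δ * ((n : ℝ) / d) ^ d) ^ ((1 : ℝ) / (k : ℝ)) ≤ Real.exp 1 * T / k := by
    have h1 : (δ * ((n : ℝ) / d) ^ d) ^ ((1 : ℝ) / (k : ℝ)) ≤
        ((Real.exp 1 * T / k) ^ k) ^ ((1 : ℝ) / (k : ℝ)) :=
      Real.rpow_le_rpow hlhs0 hchain (by positivity)
    have h2 : ((Real.exp 1 * T / k) ^ k) ^ ((1 : ℝ) / (k : ℝ)) = Real.exp 1 * T / k := by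
      rw [← Real.rpow_natCast (Real.exp 1 * T / k) k, ← Real.rpow_mul hbase0]
      rw [mul_one_div, div_self hk0.ne', Real.rpow_one]
    rwa [h2] at h1
  -- expand the left-hand side of hroot
  have hexpand : (δ * ((n : ℝ) / d) ^ d) ^ ((1 : ℝ) / (k : ℝ)) =
      δ ^ ((1 : ℝ) / (k : ℝ)) * ((n : ℝ) / d) ^ ((1 : ℝ) / (γ : ℝ)) := by
    rw [Real.mul_rpow hδ0.le (by positivity)]
    congr 1
    rw [← Real.rpow_natCast ((n:ℝ)/d) d, ← Real.rpow_mul hnd0.le]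
    congr 1
    have hγ0 : (γ : ℝ) ≠ 0 := by positivity
    have hd0 : (d : ℝ) ≠ 0 := by positivity
    have : (k : ℝ) = (γ : ℝ) * d := by exact_mod_cast rfl
    rw [this]
    field_simp
  rw [hexpand] at hroot
  -- rearrange
  have hkcast : ((γ * d : ℕ) : ℝ) = (k : ℝ) := by rw [hkdef]
  have hfin : (Real.exp 1)⁻¹ * (k : ℝ) * δ ^ ((1 : ℝ) / (k : ℝ)) *
      ((n : ℝ) / d) ^ ((1 : ℝ) / (γ : ℝ)) ≤ (T : ℝ) := by
    have he : (0 : ℝ) < Real.exp 1 := Real.exp_pos 1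
    rw [le_div_iff₀ hk0] at hroot
    calc (Real.exp 1)⁻¹ * (k : ℝ) * δ ^ ((1 : ℝ) / (k : ℝ)) *
        ((n : ℝ) / d) ^ ((1 : ℝ) / (γ : ℝ))
        = (δ ^ ((1 : ℝ) / (k : ℝ)) * ((n : ℝ) / d) ^ ((1 : ℝ) / (γ : ℝ)) * k) / Real.exp 1 := by
          field_simp
      _ ≤ (Real.exp 1 * T) / Real.exp 1 := by
          gcongr
      _ = T := by field_simp
  have h1k : ((1 : ℝ) / ((γ * d : ℕ) : ℝ)) = (1 : ℝ) / (k : ℝ) := by rw [hkdef]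
  calc (Real.exp 1)⁻¹ * (γ * d : ℝ) * δ ^ ((1 : ℝ) / (γ * d : ℝ)) *
        ((n : ℝ) / (d : ℝ)) ^ ((1 : ℝ) / (γ : ℝ))
      = (Real.exp 1)⁻¹ * (k : ℝ) * δ ^ ((1 : ℝ) / (k : ℝ)) *
        ((n : ℝ) / d) ^ ((1 : ℝ) / (γ : ℝ)) := by norm_cast
    _ ≤ (T : ℝ) := hfin
end

section
/- Let (n_k), (d_k), (γ_k), (T_k) be sequences of positive integers with d_k ≤ n_k, d_k/n_k → 0, γ_k/log(n_k/d_k) → 0, and γ_k·d_k → ∞ as k → ∞, and let δ ∈ (0,1] be fixed. If δ·C(n_k,d_k) ≤ ∑_{i=0}^{γ_k d_k} C(T_k,i) for all k, then for every ε > 0 there exists K such that for all k ≥ K, T_k ≥ e^{-(1+ε)}·γ_k·d_k·(n_k/d_k)^{1/γ_k}. -/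
open Filter

open Finset in
lemma pow_div_le_choose : ∀ (d n : ℕ), d ≤ n → ((n : ℝ) / (d : ℝ)) ^ d ≤ (n.choose d : ℝ) := by
  intro d
  induction d with
  | zero => intro n _; simp
  | succ d ih =>
    intro n hn
    obtain ⟨m, rfl⟩ : ∃ m, n = m + 1 := ⟨n - 1, by omega⟩
    have hdm : d ≤ m := by omega
    have key : ((m + 1).choose (d + 1) : ℝ) = ((m:ℝ) + 1) * (m.choose d : ℝ) / ((d:ℝ) + 1) := by
      have := Nat.add_one_mul_choose_eq m d
      have : ((m + 1) * m.choose d : ℝ) = ((m + 1).choose (d + 1) * (d + 1) : ℝ) := by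
        exact_mod_cast congrArg (Nat.cast : ℕ → ℝ) this
      field_simp
      push_cast at this ⊢
      linarith
    rcases Nat.eq_zero_or_pos d with hd0 | hd0
    · subst hd0; simp [key]
    have hq : ((m:ℝ) + 1) / ((d:ℝ) + 1) ≤ (m:ℝ) / (d:ℝ) := by
      rw [div_le_div_iff₀ (by positivity) (by exact_mod_cast hd0)]
      have : (d:ℝ) ≤ (m:ℝ) := by exact_mod_cast hdm
      nlinarith
    have hpos : (0:ℝ) ≤ ((m:ℝ) + 1) / ((d:ℝ) + 1) := by positivity
    calc (((m+1:ℕ):ℝ) / ((d+1:ℕ):ℝ)) ^ (d+1)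
        = (((m:ℝ)+1)/((d:ℝ)+1)) * ((((m:ℝ)+1)/((d:ℝ)+1)) ^ d) := by push_cast; ring
      _ ≤ (((m:ℝ)+1)/((d:ℝ)+1)) * (((m:ℝ)/(d:ℝ)) ^ d) := by
          exact mul_le_mul_of_nonneg_left (pow_le_pow_left₀ (by positivity) hq d) hpos
      _ ≤ (((m:ℝ)+1)/((d:ℝ)+1)) * (m.choose d : ℝ) :=
          mul_le_mul_of_nonneg_left (ih m hdm) hpos
      _ = ((m + 1).choose (d + 1) : ℝ) := by rw [key]; ring

lemma sum_choose_le_exp_pow {m T : ℕ} (hm : 0 < m) (hmT : m ≤ T) :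
    (∑ i ∈ Finset.range (m + 1), ((T.choose i : ℝ))) ≤ (Real.exp 1 * T / m) ^ m := by
  have hT : 0 < T := lt_of_lt_of_le hm hmT
  set x : ℝ := (m : ℝ) / (T : ℝ) with hx
  have hx0 : 0 < x := by positivity
  have hx1 : x ≤ 1 := by
    rw [hx, div_le_one (by exact_mod_cast hT)]; exact_mod_cast hmT
  have key : (∑ i ∈ Finset.range (m + 1), ((T.choose i : ℝ))) * x ^ m ≤ Real.exp m := by
    calc (∑ i ∈ Finset.range (m + 1), ((T.choose i : ℝ))) * x ^ m
        = ∑ i ∈ Finset.range (m + 1), ((T.choose i : ℝ)) * x ^ m := by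
          rw [Finset.sum_mul]
      _ ≤ ∑ i ∈ Finset.range (m + 1), ((T.choose i : ℝ)) * x ^ i := by
          apply Finset.sum_le_sum
          intro i hi
          have : i ≤ m := by simpa [Nat.lt_succ_iff] using Finset.mem_range.mp hi
          exact mul_le_mul_of_nonneg_left
            (pow_le_pow_of_le_one hx0.le hx1 this) (by positivity)
      _ ≤ ∑ i ∈ Finset.range (T + 1), ((T.choose i : ℝ)) * x ^ i := by
          apply Finset.sum_le_sum_of_subset_of_nonneg
          · exact Finset.range_subset_range.mpr (by omega)
          · intro i _ _; positivity
      _ = (x + 1) ^ T := by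
          rw [add_pow]
          apply Finset.sum_congr rfl
          intro i _
          ring
      _ ≤ Real.exp x ^ T := by
          apply pow_le_pow_left₀ (by positivity) (Real.add_one_le_exp x)
      _ = Real.exp ((T : ℝ) * x) := by rw [Real.exp_nat_mul]
      _ = Real.exp m := by
          congr 1
          rw [hx]; field_simp [(by exact_mod_cast hT.ne' : (T:ℝ) ≠ 0)]
  have hxm : 0 < x ^ m := by positivity
  have h := (le_div_iff₀ hxm).mpr key
  refine h.trans (le_of_eq ?_)
  have h1 : Real.exp (m : ℝ) = Real.exp 1 ^ m := by
    rw [← Real.exp_nat_mul, mul_one]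
  rw [h1, ← div_pow]
  congr 1
  rw [hx]
  rw [div_div_eq_mul_div]

lemma sum_choose_le_two_pow (m T : ℕ) :
    ∑ i ∈ Finset.range (m + 1), T.choose i ≤ 2 ^ T := by
  calc ∑ i ∈ Finset.range (m + 1), T.choose i
      ≤ ∑ i ∈ Finset.range (m + T + 1), T.choose i :=
        Finset.sum_le_sum_of_subset (Finset.range_subset_range.mpr (by omega))
    _ = ∑ i ∈ Finset.range (T + 1), T.choose i := by
        symm
        apply Finset.sum_subset (Finset.range_subset_range.mpr (by omega))
        intro i hi hni
        simp only [Finset.mem_range] at hi hni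
        exact Nat.choose_eq_zero_of_lt (by omega)
    _ = 2 ^ T := Nat.sum_range_choose T

/-- Asymptotic converse for group testing with γ-divisible items: under the scaling
`d/n → 0`, `γ/log(n/d) → 0`, `γd → ∞`, any scheme whose success count satisfies the
counting bound with success probability at least `δ` requires
`T ≥ e^{-(1+o(1))} γ d (n/d)^{1/γ}` tests. -/
theorem asymptotic_converse_gamma_divisible
    (n d γ T : ℕ → ℕ)
    (hn : ∀ k, 0 < n k) (hd : ∀ k, 0 < d k) (hγ : ∀ k, 0 < γ k) (hT : ∀ k, 0 < T k)
    (hdn : ∀ k, d k ≤ n k)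
    (hdno : Tendsto (fun k => (d k : ℝ) / (n k : ℝ)) atTop (nhds 0))
    (hγo : Tendsto (fun k => (γ k : ℝ) / Real.log ((n k : ℝ) / (d k : ℝ))) atTop (nhds 0))
    (hγd : Tendsto (fun k => (γ k * d k : ℝ)) atTop atTop)
    (δ : ℝ) (hδ : 0 < δ ∧ δ ≤ 1)
    (hcount : ∀ k, δ * ((n k).choose (d k) : ℝ) ≤
      ∑ i ∈ Finset.range (γ k * d k + 1), ((T k).choose i : ℝ)) :
    ∀ ε > 0, ∃ K : ℕ, ∀ k ≥ K,
      Real.exp (-(1 + ε)) * (γ k : ℝ) * (d k : ℝ) *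
          ((n k : ℝ) / (d k : ℝ)) ^ ((1 : ℝ) / (γ k : ℝ)) ≤ (T k : ℝ) := by
  obtain ⟨hδ0, hδ1⟩ := hδ
  intro ε hε
  set L : ℕ → ℝ := fun k => Real.log ((n k : ℝ) / (d k : ℝ)) with hLdef
  -- n/d → ∞
  have hnd : Tendsto (fun k => (n k : ℝ) / (d k : ℝ)) atTop atTop := by
    have h0 : Tendsto (fun k => (d k : ℝ) / (n k : ℝ)) atTop (nhdsWithin 0 (Set.Ioi 0)) := by
      rw [tendsto_nhdsWithin_iff]
      refine ⟨hdno, Filter.Eventually.of_forall fun k => ?_⟩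
      have h1 : (0:ℝ) < (d k : ℝ) := by exact_mod_cast hd k
      have h2 : (0:ℝ) < (n k : ℝ) := by exact_mod_cast hn k
      exact div_pos h1 h2
    have := h0.inv_tendsto_nhdsGT_zero
    refine this.congr fun k => ?_
    simp [Pi.inv_apply, inv_div]
  have hLtop : Tendsto L atTop atTop := Real.tendsto_log_atTop.comp hnd
  have E1 : ∀ᶠ k in atTop, 1 ≤ L k := hLtop.eventually_ge_atTop 1
  have E2 : ∀ᶠ k in atTop, (γ k : ℝ) / L k < 1 / 2 :=
    hγo.eventually (gt_mem_nhds (by norm_num))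
  have E3 : ∀ᶠ k in atTop,
      max (1 - Real.log δ) (-Real.log δ / ε) ≤ ((γ k : ℝ) * (d k : ℝ)) :=
    hγd.eventually_ge_atTop _
  obtain ⟨K, hK⟩ := ((E1.and E2).and E3).exists_forall_of_atTop
  refine ⟨K, fun k hk => ?_⟩
  obtain ⟨⟨hL1, hγL⟩, hm3⟩ := hK k hk
  have hLpos : (0:ℝ) < L k := lt_of_lt_of_le one_pos hL1
  have hγpos : (0:ℝ) < (γ k : ℝ) := by exact_mod_cast hγ k
  have hdpos : (0:ℝ) < (d k : ℝ) := by exact_mod_cast hd k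
  have hnpos : (0:ℝ) < (n k : ℝ) := by exact_mod_cast hn k
  have hTpos : (0:ℝ) < (T k : ℝ) := by exact_mod_cast hT k
  have hndpos : (0:ℝ) < (n k : ℝ) / (d k : ℝ) := div_pos hnpos hdpos
  set m : ℕ := γ k * d k with hmdef
  have hm0 : 0 < m := Nat.mul_pos (hγ k) (hd k)
  have hmR : ((m : ℕ) : ℝ) = (γ k : ℝ) * (d k : ℝ) := by push_cast [hmdef]; ring
  have hmpos : (0:ℝ) < (m : ℝ) := by rw [hmR]; positivity
  have hm1 : 1 - Real.log δ ≤ (m:ℝ) := by rw [hmR]; exact (le_max_left _ _).trans hm3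
  have hm2 : -Real.log δ / ε ≤ (m:ℝ) := by rw [hmR]; exact (le_max_right _ _).trans hm3
  -- γ ≤ L / 2
  have hγhalf : (γ k : ℝ) ≤ L k / 2 := by
    have := (div_lt_iff₀ hLpos).mp hγL
    linarith
  -- basic chain: δ (n/d)^d ≤ sum
  have hchain : δ * ((n k : ℝ) / (d k : ℝ)) ^ (d k) ≤
      ∑ i ∈ Finset.range (m + 1), ((T k).choose i : ℝ) := by
    calc δ * ((n k : ℝ) / (d k : ℝ)) ^ (d k)
        ≤ δ * ((n k).choose (d k) : ℝ) :=
          mul_le_mul_of_nonneg_left (pow_div_le_choose (d k) (n k) (hdn k)) hδ0.le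
      _ ≤ _ := hcount k
  have hδppos : (0:ℝ) < δ * ((n k : ℝ) / (d k : ℝ)) ^ (d k) := by positivity
  have hlogδp : Real.log (δ * ((n k : ℝ) / (d k : ℝ)) ^ (d k)) =
      Real.log δ + (d k : ℝ) * L k := by
    rw [Real.log_mul hδ0.ne' (by positivity), Real.log_pow]
  -- Step 1: m ≤ T k
  have hstep1 : m ≤ T k := by
    have h2T : δ * ((n k : ℝ) / (d k : ℝ)) ^ (d k) ≤ (2:ℝ) ^ (T k) := by
      refine hchain.trans ?_
      have := sum_choose_le_two_pow m (T k)
      calc (∑ i ∈ Finset.range (m + 1), ((T k).choose i : ℝ))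
          = ((∑ i ∈ Finset.range (m + 1), (T k).choose i : ℕ) : ℝ) := by push_cast; ring
        _ ≤ ((2 ^ (T k) : ℕ) : ℝ) := by exact_mod_cast this
        _ = (2:ℝ) ^ (T k) := by push_cast; ring
    have hlog : Real.log δ + (d k : ℝ) * L k ≤ (T k : ℝ) * Real.log 2 := by
      have := Real.log_le_log hδppos h2T
      rwa [hlogδp, Real.log_pow] at this
    have hlog2 : Real.log 2 ≤ 1 := by
      rw [← Real.log_exp 1]
      apply Real.log_le_log two_pos
      have := Real.exp_one_gt_d9
      linarith
    have hT2 : Real.log δ + (d k : ℝ) * L k ≤ (T k : ℝ) := by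
      have : (T k : ℝ) * Real.log 2 ≤ (T k : ℝ) * 1 :=
        mul_le_mul_of_nonneg_left hlog2 hTpos.le
      linarith
    have hdL : 2 * ((m:ℝ)) ≤ (d k : ℝ) * L k := by
      rw [hmR]
      nlinarith
    have : (m : ℝ) ≤ (T k : ℝ) := by nlinarith
    exact_mod_cast this
  -- Step 2
  have hB := sum_choose_le_exp_pow hm0 hstep1
  have hchain2 : δ * ((n k : ℝ) / (d k : ℝ)) ^ (d k) ≤
      (Real.exp 1 * (T k : ℝ) / (m : ℝ)) ^ m := hchain.trans hB
  have hH : Real.log δ + (d k : ℝ) * L k ≤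
      (m : ℝ) * (1 + Real.log (T k : ℝ) - Real.log (m : ℝ)) := by
    have h := Real.log_le_log hδppos hchain2
    rw [hlogδp, Real.log_pow, Real.log_div (by positivity) hmpos.ne',
      Real.log_mul (Real.exp_pos 1).ne' hTpos.ne', Real.log_exp] at h
    linarith
  have hdL2 : (d k : ℝ) * L k = (m : ℝ) * (L k / (γ k : ℝ)) := by
    rw [hmR]; field_simp
  have hεm : -Real.log δ ≤ ε * (m : ℝ) := by
    rw [div_le_iff₀ hε] at hm2
    linarith
  have key : -(1 + ε) + Real.log ((m:ℝ)) + L k / (γ k : ℝ) ≤ Real.log (T k : ℝ) := by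
    rw [hdL2] at hH
    have e1 : (m:ℝ) * (1 + Real.log (T k:ℝ) - Real.log ((m:ℝ))) =
        (m:ℝ) + (m:ℝ) * Real.log (T k:ℝ) - (m:ℝ) * Real.log ((m:ℝ)) := by ring
    have h2 : (m:ℝ) * (-(1 + ε) + Real.log ((m:ℝ)) + L k / (γ k : ℝ)) ≤
        (m:ℝ) * Real.log (T k : ℝ) := by
      have e2 : (m:ℝ) * (-(1 + ε) + Real.log ((m:ℝ)) + L k / (γ k : ℝ)) =
          -(m:ℝ) - ε * (m:ℝ) + (m:ℝ) * Real.log ((m:ℝ)) + (m:ℝ) * (L k / (γ k : ℝ)) := by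
        ring
      rw [e1] at hH
      rw [e2]
      linarith
    exact le_of_mul_le_mul_left h2 hmpos
  -- conclude
  have hLHSpos : (0:ℝ) < Real.exp (-(1 + ε)) * (γ k : ℝ) * (d k : ℝ) *
      ((n k : ℝ) / (d k : ℝ)) ^ ((1 : ℝ) / (γ k : ℝ)) := by positivity
  rw [← Real.log_le_log_iff hLHSpos hTpos]
  have hlogLHS : Real.log (Real.exp (-(1 + ε)) * (γ k : ℝ) * (d k : ℝ) *
      ((n k : ℝ) / (d k : ℝ)) ^ ((1 : ℝ) / (γ k : ℝ))) =
      -(1 + ε) + Real.log (γ k : ℝ) + Real.log (d k : ℝ) + (1 / (γ k : ℝ)) * L k := by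
    rw [Real.log_mul (by positivity) (by positivity),
      Real.log_mul (by positivity) (by positivity),
      Real.log_mul (Real.exp_pos _).ne' hγpos.ne',
      Real.log_exp, Real.log_rpow hndpos]
  have hlogm : Real.log ((m:ℝ)) = Real.log (γ k : ℝ) + Real.log (d k : ℝ) := by
    rw [hmR, Real.log_mul hγpos.ne' hdpos.ne']
  rw [hlogLHS]
  rw [hlogm] at key
  have heq : (1 / (γ k : ℝ)) * L k = L k / (γ k : ℝ) := by ring
  rw [heq]
  linarith [key]
end

section
/- Let T ≥ 1 and γ ≥ 1 be integers, let P ⊆ {1,…,T} with |P| = w, and let 0 ≤ l ≤ γ. Then the number of ordered pairs of functions (f,g), where f,g : {1,…,γ} → {1,…,T}, satisfying range(f) ⊆ P ∪ range(g), range(g) ⊆ P ∪ range(f), and |(range(f) ∪ range(g)) \ P| = l, is at most C(T−w, l) · γ^{2l} · (w+l)^{2(γ−l)}. -/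
open Finset

section MaskAux

variable {T γ l w : ℕ}

/-- A chosen preimage of `s` under `f`. -/
noncomputable def posOf (f : Fin γ → Fin T) (s : Fin T)
    (hs : s ∈ Finset.image f Finset.univ) : Fin γ :=
  (Finset.univ.filter (fun p => f p = s)).min' (by
    obtain ⟨p, -, hp⟩ := Finset.mem_image.mp hs
    exact ⟨p, by simp [hp]⟩)

lemma f_posOf (f : Fin γ → Fin T) (s : Fin T) (hs : s ∈ Finset.image f Finset.univ) :
    f (posOf f s hs) = s := by
  have h := Finset.min'_mem (Finset.univ.filter (fun p => f p = s)) (by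
    obtain ⟨p, -, hp⟩ := Finset.mem_image.mp hs
    exact ⟨p, by simp [hp]⟩)
  exact (Finset.mem_filter.mp h).2

/-- Positions of chosen preimages of the elements of `S`. -/
noncomputable def encA (f : Fin γ → Fin T) (S : Finset (Fin T)) (hS : S.card = l)
    (hSf : S ⊆ Finset.image f Finset.univ) : Fin l → Fin γ :=
  fun k => posOf f (S.orderIsoOfFin hS k) (hSf (S.orderIsoOfFin hS k).2)

lemma f_encA (f : Fin γ → Fin T) (S : Finset (Fin T)) (hS : S.card = l)
    (hSf : S ⊆ Finset.image f Finset.univ) (k : Fin l) :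
    f (encA f S hS hSf k) = (S.orderIsoOfFin hS k : Fin T) :=
  f_posOf _ _ _

lemma encA_injective (f : Fin γ → Fin T) (S : Finset (Fin T)) (hS : S.card = l)
    (hSf : S ⊆ Finset.image f Finset.univ) :
    Function.Injective (encA f S hS hSf) := by
  intro k k' h
  have h2 : (S.orderIsoOfFin hS k : Fin T) = (S.orderIsoOfFin hS k' : Fin T) := by
    rw [← f_encA f S hS hSf k, ← f_encA f S hS hSf k', h]
  exact (S.orderIsoOfFin hS).injective (Subtype.ext h2)

lemma card_complA (f : Fin γ → Fin T) (S : Finset (Fin T)) (hS : S.card = l)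
    (hSf : S ⊆ Finset.image f Finset.univ) :
    ((Finset.image (encA f S hS hSf) Finset.univ)ᶜ : Finset (Fin γ)).card = γ - l := by
  rw [Finset.card_compl,
    Finset.card_image_of_injective _ (encA_injective f S hS hSf)]
  simp

/-- Enumeration of the positions not used as chosen preimages. -/
noncomputable def encT (f : Fin γ → Fin T) (S : Finset (Fin T)) (hS : S.card = l)
    (hSf : S ⊆ Finset.image f Finset.univ) : Fin (γ - l) → Fin γ :=
  fun j => (((Finset.image (encA f S hS hSf) Finset.univ)ᶜ : Finset (Fin γ)).orderEmbOfFin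
    (card_complA f S hS hSf)) j

/-- Encoded values at the remaining positions. -/
noncomputable def encH (P : Finset (Fin T)) (f : Fin γ → Fin T) (S : Finset (Fin T))
    (hS : S.card = l) (hSf : S ⊆ Finset.image f Finset.univ)
    (hPS : (P ∪ S).card = w + l)
    (hfPS : Finset.image f Finset.univ ⊆ P ∪ S) : Fin (γ - l) → Fin (w + l) :=
  fun j => ((P ∪ S).orderIsoOfFin hPS).symm
    ⟨f (encT f S hS hSf j), hfPS (Finset.mem_image_of_mem f (Finset.mem_univ _))⟩

lemma orderEmbOfFin_congr' {α : Type*} [LinearOrder α] {k : ℕ} {s s' : Finset α}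
    (hss : s = s') (h : s.card = k) (h' : s'.card = k) (j : Fin k) :
    s.orderEmbOfFin h j = s'.orderEmbOfFin h' j := by
  subst hss; rfl

/-- The encoding determines the function: decodability / injectivity. -/
lemma decode_inj (P : Finset (Fin T)) (f f' : Fin γ → Fin T) (S S' : Finset (Fin T))
    (hSS : S = S')
    (hS : S.card = l) (hS' : S'.card = l)
    (hSf : S ⊆ Finset.image f Finset.univ) (hSf' : S' ⊆ Finset.image f' Finset.univ)
    (hPS : (P ∪ S).card = w + l) (hPS' : (P ∪ S').card = w + l)
    (hfPS : Finset.image f Finset.univ ⊆ P ∪ S)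
    (hfPS' : Finset.image f' Finset.univ ⊆ P ∪ S')
    (hA : encA f S hS hSf = encA f' S' hS' hSf')
    (hH : encH P f S hS hSf hPS hfPS = encH P f' S' hS' hSf' hPS' hfPS') :
    f = f' := by
  subst hSS
  have himg : Finset.image (encA f S hS hSf) Finset.univ
      = Finset.image (encA f' S hS' hSf') Finset.univ := by rw [hA]
  have hT : ∀ j, encT f S hS hSf j = encT f' S hS' hSf' j := by
    intro j
    exact orderEmbOfFin_congr' (by rw [himg]) _ _ j
  funext p
  by_cases hp : p ∈ Finset.image (encA f S hS hSf) Finset.univ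
  · obtain ⟨k, -, hk⟩ := Finset.mem_image.mp hp
    have h1 : f p = (S.orderIsoOfFin hS k : Fin T) := hk ▸ f_encA f S hS hSf k
    have hk' : encA f' S hS' hSf' k = p := by rw [← hA]; exact hk
    have h2 : f' p = (S.orderIsoOfFin hS' k : Fin T) := hk' ▸ f_encA f' S hS' hSf' k
    rw [h1, h2]
  · have hp' : p ∈ ((Finset.image (encA f S hS hSf) Finset.univ)ᶜ : Finset (Fin γ)) :=
      Finset.mem_compl.mpr hp
    obtain ⟨j, hj⟩ : ∃ j, encT f S hS hSf j = p := by
      have hr := Finset.range_orderEmbOfFin _ (card_complA f S hS hSf)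
      have : p ∈ Set.range (((Finset.image (encA f S hS hSf) Finset.univ)ᶜ :
          Finset (Fin γ)).orderEmbOfFin (card_complA f S hS hSf)) := by
        rw [hr]; exact_mod_cast hp'
      obtain ⟨j, hj⟩ := this
      exact ⟨j, hj⟩
    have h1 := congrFun hH j
    have h2 := congrArg ((P ∪ S).orderIsoOfFin hPS) h1
    unfold encH at h2
    rw [OrderIso.apply_symm_apply] at h2
    have h2' : (((P ∪ S).orderIsoOfFin hPS)
        (((P ∪ S).orderIsoOfFin hPS').symm
          ⟨f' (encT f' S hS' hSf' j), hfPS' (Finset.mem_image_of_mem f' (Finset.mem_univ _))⟩)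
        : Fin T) = f' (encT f' S hS' hSf' j) := by
      have : ((P ∪ S).orderIsoOfFin hPS) = ((P ∪ S).orderIsoOfFin hPS') := rfl
      rw [this, OrderIso.apply_symm_apply]
    have h3 : f (encT f S hS hSf j) = f' (encT f' S hS' hSf' j) := by
      have := congrArg Subtype.val h2
      simpa [h2'] using this
    rw [hj] at h3
    rw [← hT j, hj] at h3
    exact h3

end MaskAux

/-- Counting pairs of mutually-masking placement lists with exactly `l` new positive
tests: the number of pairs `(f, g)` of functions `{1,…,γ} → {1,…,T}` with
`range f ⊆ P ∪ range g`, `range g ⊆ P ∪ range f`, and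
`|(range f ∪ range g) \ P| = l` is at most `C(T−w, l)·γ^{2l}·(w+l)^{2(γ−l)}`. -/
theorem masking_pairs_count_with_l_new_tests
    (T γ : ℕ) (hT : 1 ≤ T) (hγ : 1 ≤ γ)
    (P : Finset (Fin T)) (w : ℕ) (hw : P.card = w)
    (l : ℕ) (hl : l ≤ γ) :
    ((Finset.univ : Finset ((Fin γ → Fin T) × (Fin γ → Fin T))).filter
        (fun p =>
          Finset.image p.1 Finset.univ ⊆ P ∪ Finset.image p.2 Finset.univ ∧
          Finset.image p.2 Finset.univ ⊆ P ∪ Finset.image p.1 Finset.univ ∧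
          ((Finset.image p.1 Finset.univ ∪ Finset.image p.2 Finset.univ) \ P).card = l)).card
      ≤ (T - w).choose l * γ ^ (2 * l) * (w + l) ^ (2 * (γ - l)) := by
  classical
  set Fs := ((Finset.univ : Finset ((Fin γ → Fin T) × (Fin γ → Fin T))).filter
        (fun p =>
          Finset.image p.1 Finset.univ ⊆ P ∪ Finset.image p.2 Finset.univ ∧
          Finset.image p.2 Finset.univ ⊆ P ∪ Finset.image p.1 Finset.univ ∧
          ((Finset.image p.1 Finset.univ ∪ Finset.image p.2 Finset.univ) \ P).card = l))
    with hFs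
  -- the target finset
  set B : Finset (Finset (Fin T) × ((Fin l → Fin γ) × (Fin l → Fin γ) ×
      (Fin (γ - l) → Fin (w + l)) × (Fin (γ - l) → Fin (w + l)))) :=
    (Pᶜ.powersetCard l) ×ˢ (Finset.univ) with hB
  have hBcard : B.card = (T - w).choose l * γ ^ (2 * l) * (w + l) ^ (2 * (γ - l)) := by
    rw [hB, Finset.card_product, Finset.card_powersetCard, Finset.card_compl, Finset.card_univ]
    simp only [Fintype.card_fin, hw, Fintype.card_prod, Fintype.card_fun]
    rw [two_mul, pow_add, two_mul, pow_add]
    ring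
  rcases Fs.eq_empty_or_nonempty with he | ⟨p₀, hp₀⟩
  · rw [he]; simp
  -- derivations valid on Fs
  set Sof : ((Fin γ → Fin T) × (Fin γ → Fin T)) → Finset (Fin T) :=
    fun q => (Finset.image q.1 Finset.univ ∪ Finset.image q.2 Finset.univ) \ P with hSof
  have dmem : ∀ q ∈ Fs,
      (Finset.image q.1 Finset.univ ⊆ P ∪ Finset.image q.2 Finset.univ) ∧
      (Finset.image q.2 Finset.univ ⊆ P ∪ Finset.image q.1 Finset.univ) ∧
      (Sof q).card = l := by
    intro q hq
    rw [hFs, Finset.mem_filter] at hq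
    exact hq.2
  have d1 : ∀ q ∈ Fs, (Sof q).card = l := fun q hq => (dmem q hq).2.2
  have d2 : ∀ q ∈ Fs, Sof q ⊆ Finset.image q.1 Finset.univ := by
    intro q hq s hs
    rw [hSof] at hs
    obtain ⟨hsu, hsp⟩ := Finset.mem_sdiff.mp hs
    rcases Finset.mem_union.mp hsu with h | h
    · exact h
    · rcases Finset.mem_union.mp ((dmem q hq).2.1 h) with h' | h'
      · exact absurd h' hsp
      · exact h'
  have d3 : ∀ q ∈ Fs, Sof q ⊆ Finset.image q.2 Finset.univ := by
    intro q hq s hs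
    rw [hSof] at hs
    obtain ⟨hsu, hsp⟩ := Finset.mem_sdiff.mp hs
    rcases Finset.mem_union.mp hsu with h | h
    · rcases Finset.mem_union.mp ((dmem q hq).1 h) with h' | h'
      · exact absurd h' hsp
      · exact h'
    · exact h
  have d4 : ∀ q ∈ Fs, (P ∪ Sof q).card = w + l := by
    intro q hq
    rw [Finset.card_union_of_disjoint Finset.disjoint_sdiff, hw, d1 q hq]
  have d5 : ∀ q ∈ Fs, Finset.image q.1 Finset.univ ⊆ P ∪ Sof q := by
    intro q hq x hx
    by_cases hxp : x ∈ P
    · exact Finset.mem_union_left _ hxp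
    · exact Finset.mem_union_right _ (Finset.mem_sdiff.mpr
        ⟨Finset.mem_union_left _ hx, hxp⟩)
  have d6 : ∀ q ∈ Fs, Finset.image q.2 Finset.univ ⊆ P ∪ Sof q := by
    intro q hq x hx
    by_cases hxp : x ∈ P
    · exact Finset.mem_union_left _ hxp
    · exact Finset.mem_union_right _ (Finset.mem_sdiff.mpr
        ⟨Finset.mem_union_right _ hx, hxp⟩)
  -- the encoding map
  set Φ : ((Fin γ → Fin T) × (Fin γ → Fin T)) → Finset (Fin T) × ((Fin l → Fin γ) ×
      (Fin l → Fin γ) × (Fin (γ - l) → Fin (w + l)) × (Fin (γ - l) → Fin (w + l))) :=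
    fun q =>
      if hq : q ∈ Fs then
        (Sof q,
          encA q.1 (Sof q) (d1 q hq) (d2 q hq),
          encA q.2 (Sof q) (d1 q hq) (d3 q hq),
          encH P q.1 (Sof q) (d1 q hq) (d2 q hq) (d4 q hq) (d5 q hq),
          encH P q.2 (Sof q) (d1 q hq) (d3 q hq) (d4 q hq) (d6 q hq))
      else
        (Sof p₀,
          encA p₀.1 (Sof p₀) (d1 p₀ hp₀) (d2 p₀ hp₀),
          encA p₀.2 (Sof p₀) (d1 p₀ hp₀) (d3 p₀ hp₀),
          encH P p₀.1 (Sof p₀) (d1 p₀ hp₀) (d2 p₀ hp₀) (d4 p₀ hp₀) (d5 p₀ hp₀),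
          encH P p₀.2 (Sof p₀) (d1 p₀ hp₀) (d3 p₀ hp₀) (d4 p₀ hp₀) (d6 p₀ hp₀))
    with hΦ
  have hΦeq : ∀ q (hq : q ∈ Fs), Φ q =
      (Sof q,
        encA q.1 (Sof q) (d1 q hq) (d2 q hq),
        encA q.2 (Sof q) (d1 q hq) (d3 q hq),
        encH P q.1 (Sof q) (d1 q hq) (d2 q hq) (d4 q hq) (d5 q hq),
        encH P q.2 (Sof q) (d1 q hq) (d3 q hq) (d4 q hq) (d6 q hq)) := by
    intro q hq
    rw [hΦ]
    exact dif_pos hq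
  have hmaps : ∀ q ∈ Fs, Φ q ∈ B := by
    intro q hq
    rw [hΦeq q hq, hB, Finset.mem_product]
    dsimp only
    refine ⟨Finset.mem_powersetCard.mpr ⟨?_, d1 q hq⟩, Finset.mem_univ _⟩
    intro s hs
    exact Finset.mem_compl.mpr (Finset.mem_sdiff.mp hs).2
  have hinj : Set.InjOn Φ ↑Fs := by
    intro q hq q' hq' heq
    rw [hΦeq q hq, hΦeq q' hq'] at heq
    simp only [Prod.mk.injEq] at heq
    obtain ⟨hS, hA1, hA2, hH1, hH2⟩ := heq
    have hf1 : q.1 = q'.1 :=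
      decode_inj P q.1 q'.1 (Sof q) (Sof q') hS (d1 q hq) (d1 q' hq')
        (d2 q hq) (d2 q' hq') (d4 q hq) (d4 q' hq') (d5 q hq) (d5 q' hq') hA1 hH1
    have hf2 : q.2 = q'.2 :=
      decode_inj P q.2 q'.2 (Sof q) (Sof q') hS (d1 q hq) (d1 q' hq')
        (d3 q hq) (d3 q' hq') (d4 q hq) (d4 q' hq') (d6 q hq) (d6 q' hq') hA2 hH2
    exact Prod.ext hf1 hf2
  calc Fs.card ≤ B.card := Finset.card_le_card_of_injOn Φ hmaps hinj
    _ = _ := hBcard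
end

section
/- Let T ≥ 1 and γ ≥ 1 be integers, let P ⊆ {1,…,T} with |P| = w ≤ T, and let ε ∈ (0,1) satisfy γ²·(T−w) ≤ ε·(w+γ)². Then the number of ordered pairs of functions (f,g), where f,g : {1,…,γ} → {1,…,T}, satisfying range(f) ⊆ P ∪ range(g) and range(g) ⊆ P ∪ range(f), is at most (w+γ)^{2γ} / (1−ε). -/
open Finset

lemma pinned_count {γ T k : ℕ} (Q : Finset (Fin T)) (e : Fin k → Fin γ)
    (he : Function.Injective e) (v : Fin k → Fin T) :
    ((univ : Finset (Fin γ → Fin T)).filter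
      (fun f => (∀ i, f i ∈ Q) ∧ ∀ j, f (e j) = v j)).card ≤ Q.card ^ (γ - k) := by
  classical
  set c : Fin γ → Finset (Fin T) := fun i =>
    if h : ∃ j, e j = i then {v h.choose} else Q with hc
  have hsub : ((univ : Finset (Fin γ → Fin T)).filter
      (fun f => (∀ i, f i ∈ Q) ∧ ∀ j, f (e j) = v j)) ⊆ Fintype.piFinset c := by
    intro f hf
    simp only [mem_filter, mem_univ, true_and] at hf
    rw [Fintype.mem_piFinset]
    intro i
    by_cases h : ∃ j, e j = i
    · simp only [hc, dif_pos h, mem_singleton]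
      have := hf.2 h.choose
      rw [h.choose_spec] at this
      exact this
    · simp only [hc, dif_neg h]; exact hf.1 i
  calc _ ≤ (Fintype.piFinset c).card := card_le_card hsub
    _ = ∏ i : Fin γ, (c i).card := Fintype.card_piFinset c
    _ ≤ Q.card ^ (γ - k) := by
        have himg : ∀ i ∈ (univ.image e), (c i).card = 1 := by
          intro i hi
          rw [mem_image] at hi
          obtain ⟨j, _, rfl⟩ := hi
          have h : ∃ j', e j' = e j := ⟨j, rfl⟩
          simp only [hc, dif_pos h, card_singleton]
        have hrest : ∀ i ∈ (univ.image e)ᶜ, (c i).card = Q.card := by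
          intro i hi
          rw [mem_compl, mem_image] at hi
          push_neg at hi
          have h : ¬ ∃ j, e j = i := by
            rintro ⟨j, rfl⟩; exact hi j (mem_univ j) rfl
          simp only [hc, dif_neg h]
        rw [← prod_mul_prod_compl (univ.image e) (fun i => (c i).card),
          prod_congr rfl himg, prod_congr rfl hrest, prod_const_one, prod_const, one_mul,
          card_compl, card_image_of_injective _ he, card_univ, Fintype.card_fin, Fintype.card_fin]

lemma cover_count {γ T : ℕ} (Q S : Finset (Fin T)) {k : ℕ} (hk : S.card = k) :
    ((univ : Finset (Fin γ → Fin T)).filter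
      (fun f => image f univ ⊆ Q ∧ S ⊆ image f univ)).card
      ≤ γ ^ k * Q.card ^ (γ - k) := by
  classical
  set enum : Fin k → Fin T := fun j => S.orderEmbOfFin hk j with henum
  have henum_mem : ∀ j, enum j ∈ S := fun j => S.orderEmbOfFin_mem hk j
  have henum_inj : Function.Injective enum := (S.orderEmbOfFin hk).injective
  set D : (Fin k → Fin γ) → Finset (Fin γ → Fin T) := fun e =>
    (univ : Finset (Fin γ → Fin T)).filter
      (fun f => (∀ i, f i ∈ Q) ∧ ∀ j, f (e j) = enum j) with hD
  have hsub : ((univ : Finset (Fin γ → Fin T)).filter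
      (fun f => image f univ ⊆ Q ∧ S ⊆ image f univ))
      ⊆ (univ : Finset (Fin k → Fin γ)).biUnion D := by
    intro f hf
    simp only [mem_filter, mem_univ, true_and] at hf
    have hex : ∀ j : Fin k, ∃ i, f i = enum j := by
      intro j
      have := hf.2 (henum_mem j)
      rw [mem_image] at this
      obtain ⟨i, _, hi⟩ := this
      exact ⟨i, hi⟩
    rw [mem_biUnion]
    refine ⟨fun j => (hex j).choose, mem_univ _, ?_⟩
    simp only [hD, mem_filter, mem_univ, true_and]
    exact ⟨fun i => hf.1 (mem_image_of_mem f (mem_univ i)), fun j => (hex j).choose_spec⟩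
  have hcard : ∀ e : Fin k → Fin γ, (D e).card ≤ Q.card ^ (γ - k) := by
    intro e
    by_cases he : Function.Injective e
    · exact pinned_count Q e he enum
    · have : D e = ∅ := by
        rw [eq_empty_iff_forall_notMem]
        intro f hf
        simp only [hD, mem_filter, mem_univ, true_and] at hf
        refine he (fun j j' h => henum_inj ?_)
        rw [← hf.2 j, ← hf.2 j', h]
      simp [this]
  calc _ ≤ ((univ : Finset (Fin k → Fin γ)).biUnion D).card := card_le_card hsub
    _ ≤ ∑ e : Fin k → Fin γ, (D e).card := card_biUnion_le
    _ ≤ ∑ _e : Fin k → Fin γ, Q.card ^ (γ - k) := sum_le_sum (fun e _ => hcard e)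
    _ = γ ^ k * Q.card ^ (γ - k) := by
        rw [sum_const, card_univ, Fintype.card_fun, Fintype.card_fin, Fintype.card_fin,
          smul_eq_mul]
/-- Counting pairs of mutually-masking placement lists: if
`γ²·(T−w) ≤ ε·(w+γ)²` with `ε ∈ (0,1)`, then the number of pairs `(f, g)` of
functions `{1,…,γ} → {1,…,T}` with `range f ⊆ P ∪ range g` and
`range g ⊆ P ∪ range f` is at most `(w+γ)^{2γ} / (1−ε)`. -/
theorem masking_pairs_count
    (T γ : ℕ) (hT : 1 ≤ T) (hγ : 1 ≤ γ)
    (P : Finset (Fin T)) (w : ℕ) (hw : P.card = w) (hwT : w ≤ T)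
    (ε : ℝ) (hε : 0 < ε ∧ ε < 1)
    (hcond : (γ : ℝ) ^ 2 * ((T : ℝ) - (w : ℝ)) ≤ ε * ((w : ℝ) + (γ : ℝ)) ^ 2) :
    (((Finset.univ : Finset ((Fin γ → Fin T) × (Fin γ → Fin T))).filter
        (fun p =>
          Finset.image p.1 Finset.univ ⊆ P ∪ Finset.image p.2 Finset.univ ∧
          Finset.image p.2 Finset.univ ⊆ P ∪ Finset.image p.1 Finset.univ)).card : ℝ)
      ≤ ((w : ℝ) + (γ : ℝ)) ^ (2 * γ) / (1 - ε) := by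
  classical
  set R : Finset (Fin T) := Pᶜ with hR
  set r : ℕ := R.card with hr
  set A : Finset (Fin T) → Finset (Fin γ → Fin T) := fun S =>
    (Finset.univ : Finset (Fin γ → Fin T)).filter
      (fun f => Finset.image f Finset.univ ⊆ P ∪ S ∧ S ⊆ Finset.image f Finset.univ) with hA
  set V := ((Finset.univ : Finset ((Fin γ → Fin T) × (Fin γ → Fin T))).filter
        (fun p =>
          Finset.image p.1 Finset.univ ⊆ P ∪ Finset.image p.2 Finset.univ ∧
          Finset.image p.2 Finset.univ ⊆ P ∪ Finset.image p.1 Finset.univ)) with hV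
  -- Step 1: V is covered by the pieces indexed by S
  have hsub : V ⊆ (Finset.range (γ+1)).biUnion
      (fun k => (R.powersetCard k).biUnion (fun S => A S ×ˢ A S)) := by
    intro p hp
    simp only [hV, Finset.mem_filter, Finset.mem_univ, true_and] at hp
    obtain ⟨h1, h2⟩ := hp
    set S : Finset (Fin T) := (Finset.image p.1 Finset.univ ∪ Finset.image p.2 Finset.univ) \ P
      with hS
    have hSf : S ⊆ Finset.image p.1 Finset.univ := by
      intro x hx
      rw [hS, Finset.mem_sdiff, Finset.mem_union] at hx
      rcases hx.1 with h | h
      · exact h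
      · rcases Finset.mem_union.mp (h2 h) with h' | h'
        · exact absurd h' hx.2
        · exact h'
    have hSg : S ⊆ Finset.image p.2 Finset.univ := by
      intro x hx
      rw [hS, Finset.mem_sdiff, Finset.mem_union] at hx
      rcases hx.1 with h | h
      · rcases Finset.mem_union.mp (h1 h) with h' | h'
        · exact absurd h' hx.2
        · exact h'
      · exact h
    have hScard : S.card ≤ γ := by
      calc S.card ≤ (Finset.image p.1 Finset.univ).card := Finset.card_le_card hSf
        _ ≤ (Finset.univ : Finset (Fin γ)).card := Finset.card_image_le
        _ = γ := by simp
    have hfPS : Finset.image p.1 Finset.univ ⊆ P ∪ S := by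
      intro x hx
      by_cases hxP : x ∈ P
      · exact Finset.mem_union_left _ hxP
      · exact Finset.mem_union_right _
          (by rw [hS, Finset.mem_sdiff]; exact ⟨Finset.mem_union_left _ hx, hxP⟩)
    have hgPS : Finset.image p.2 Finset.univ ⊆ P ∪ S := by
      intro x hx
      by_cases hxP : x ∈ P
      · exact Finset.mem_union_left _ hxP
      · exact Finset.mem_union_right _
          (by rw [hS, Finset.mem_sdiff]; exact ⟨Finset.mem_union_right _ hx, hxP⟩)
    rw [Finset.mem_biUnion]
    refine ⟨S.card, Finset.mem_range.mpr (Nat.lt_succ_of_le hScard), ?_⟩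
    rw [Finset.mem_biUnion]
    refine ⟨S, Finset.mem_powersetCard.mpr ⟨?_, rfl⟩, ?_⟩
    · intro x hx
      rw [hR, Finset.mem_compl]
      rw [hS, Finset.mem_sdiff] at hx
      exact hx.2
    · rw [Finset.mem_product]
      constructor <;> simp only [hA, Finset.mem_filter, Finset.mem_univ, true_and]
      · exact ⟨hfPS, hSf⟩
      · exact ⟨hgPS, hSg⟩
  -- Step 2: natural-number bound
  have hAcard : ∀ k, ∀ S ∈ R.powersetCard k, (A S).card ≤ γ ^ k * (w + k) ^ (γ - k) := by
    intro k S hSk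
    rw [Finset.mem_powersetCard] at hSk
    have hPS : (P ∪ S).card = w + k := by
      rw [Finset.card_union_of_disjoint, hw, hSk.2]
      exact Finset.disjoint_left.mpr (fun x hxP hxS => by
        have := hSk.1 hxS
        rw [hR, Finset.mem_compl] at this
        exact this hxP)
    have := cover_count (γ := γ) (P ∪ S) S hSk.2
    rwa [hPS] at this
  have hnat : V.card ≤ ∑ k ∈ Finset.range (γ+1),
      r.choose k * (γ ^ k * (w + k) ^ (γ - k)) ^ 2 := by
    calc V.card ≤ ((Finset.range (γ+1)).biUnion
        (fun k => (R.powersetCard k).biUnion (fun S => A S ×ˢ A S))).card :=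
          Finset.card_le_card hsub
      _ ≤ ∑ k ∈ Finset.range (γ+1),
          ((R.powersetCard k).biUnion (fun S => A S ×ˢ A S)).card :=
          Finset.card_biUnion_le
      _ ≤ ∑ k ∈ Finset.range (γ+1), r.choose k * (γ ^ k * (w + k) ^ (γ - k)) ^ 2 := by
          refine Finset.sum_le_sum (fun k _ => ?_)
          calc ((R.powersetCard k).biUnion (fun S => A S ×ˢ A S)).card
              ≤ ∑ S ∈ R.powersetCard k, (A S ×ˢ A S).card := Finset.card_biUnion_le
            _ ≤ ∑ _S ∈ R.powersetCard k, (γ ^ k * (w + k) ^ (γ - k)) ^ 2 := by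
                refine Finset.sum_le_sum (fun S hS => ?_)
                rw [Finset.card_product, ← sq]
                exact Nat.pow_le_pow_left (hAcard k S hS) 2
            _ = r.choose k * (γ ^ k * (w + k) ^ (γ - k)) ^ 2 := by
                rw [Finset.sum_const, Finset.card_powersetCard, smul_eq_mul, hr]
  -- Step 3: real-number estimates
  set a : ℝ := (w : ℝ) + (γ : ℝ) with ha
  have ha1 : (1 : ℝ) ≤ a := by
    rw [ha]
    have : (1 : ℝ) ≤ (γ : ℝ) := by exact_mod_cast hγ
    have hw0 : (0 : ℝ) ≤ (w : ℝ) := Nat.cast_nonneg w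
    linarith
  have ha0 : (0 : ℝ) < a := lt_of_lt_of_le one_pos ha1
  have hrcast : (r : ℝ) = (T : ℝ) - (w : ℝ) := by
    rw [hr, hR, Finset.card_compl, hw, Fintype.card_fin]
    push_cast [Nat.cast_sub hwT]
    ring
  have hterm : ∀ k ∈ Finset.range (γ+1),
      (r.choose k : ℝ) * ((γ : ℝ) ^ k * ((w : ℝ) + (k : ℝ)) ^ (γ - k)) ^ 2
        ≤ ε ^ k * a ^ (2 * γ) := by
    intro k hk
    rw [Finset.mem_range, Nat.lt_succ_iff] at hk
    have h1 : (r.choose k : ℝ) ≤ (r : ℝ) ^ k := by exact_mod_cast Nat.choose_le_pow r k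
    have h2 : (w : ℝ) + (k : ℝ) ≤ a := by
      rw [ha]
      have : (k : ℝ) ≤ (γ : ℝ) := by exact_mod_cast hk
      linarith
    have h2' : (0 : ℝ) ≤ (w : ℝ) + (k : ℝ) := by positivity
    have hrγ : (r : ℝ) * (γ : ℝ) ^ 2 ≤ ε * a ^ 2 := by
      rw [hrcast, mul_comm]; exact hcond
    calc (r.choose k : ℝ) * ((γ : ℝ) ^ k * ((w : ℝ) + (k : ℝ)) ^ (γ - k)) ^ 2
        ≤ (r : ℝ) ^ k * ((γ : ℝ) ^ k * a ^ (γ - k)) ^ 2 := by gcongr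
      _ = ((r : ℝ) * (γ : ℝ) ^ 2) ^ k * a ^ (2 * (γ - k)) := by
          rw [mul_pow, mul_pow, ← pow_mul, ← pow_mul, ← pow_mul,
            Nat.mul_comm k 2, Nat.mul_comm (γ - k) 2, mul_assoc]
      _ ≤ (ε * a ^ 2) ^ k * a ^ (2 * (γ - k)) := by
          have h0 : (0 : ℝ) ≤ (r : ℝ) * (γ : ℝ) ^ 2 := by positivity
          gcongr
      _ = ε ^ k * a ^ (2 * γ) := by
          rw [mul_pow, ← pow_mul, mul_assoc, ← pow_add]
          congr 2
          omega
  have hgeom : ∑ k ∈ Finset.range (γ+1), ε ^ k ≤ 1 / (1 - ε) := by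
    rw [geom_sum_eq (ne_of_lt hε.2)]
    rw [show (ε ^ (γ+1) - 1) / (ε - 1) = (1 - ε ^ (γ+1)) / (1 - ε) by
      rw [← neg_div_neg_eq]; ring_nf]
    have hd : (0 : ℝ) < 1 - ε := by linarith [hε.2]
    have hn : (1 : ℝ) - ε ^ (γ+1) ≤ 1 := by
      have : (0 : ℝ) ≤ ε ^ (γ+1) := pow_nonneg hε.1.le _
      linarith
    gcongr
  calc (V.card : ℝ) ≤ ∑ k ∈ Finset.range (γ+1),
        (r.choose k : ℝ) * ((γ : ℝ) ^ k * ((w : ℝ) + (k : ℝ)) ^ (γ - k)) ^ 2 := by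
        exact_mod_cast hnat
    _ ≤ ∑ k ∈ Finset.range (γ+1), ε ^ k * a ^ (2 * γ) := Finset.sum_le_sum hterm
    _ = (∑ k ∈ Finset.range (γ+1), ε ^ k) * a ^ (2 * γ) := by rw [← Finset.sum_mul]
    _ ≤ (1 / (1 - ε)) * a ^ (2 * γ) := by
        have : (0 : ℝ) ≤ a ^ (2 * γ) := by positivity
        exact mul_le_mul_of_nonneg_right hgeom this
    _ = a ^ (2 * γ) / (1 - ε) := by ring
end

section
/- Let γ ≥ 1 be an integer, p ∈ (0,1), and let a be an integer with 1 ≤ a ≤ γ; set α = a/γ. Then ∑_{k=a}^{γ} C(γ,k)·p^k·(1−p)^{γ−k} ≤ exp(γ·H(max{α, 1/2})) · p^a / (1−p), where H(x) = −x·log x − (1−x)·log(1−x) is the binary entropy function in nats (with H(0) = H(1) = 0). -/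
/-- The binary entropy function in nats (`Real.log 0 = 0` in Mathlib, so
`binH 0 = binH 1 = 0` automatically). -/
noncomputable def binH (x : ℝ) : ℝ := -x * Real.log x - (1 - x) * Real.log (1 - x)

lemma choose_mul_le_one (n k : ℕ) (hk : k ≤ n) (x : ℝ) (hx0 : 0 ≤ x) (hx1 : x ≤ 1) :
    (n.choose k : ℝ) * x ^ k * (1 - x) ^ (n - k) ≤ 1 := by
  have h := add_pow x (1 - x) n
  have hx : x + (1 - x) = 1 := by ring
  rw [hx, one_pow] at h
  have hmem : k ∈ Finset.range (n + 1) := Finset.mem_range.mpr (Nat.lt_succ_of_le hk)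
  have h1x : (0 : ℝ) ≤ 1 - x := by linarith
  have hb := Finset.single_le_sum (f := fun i => x ^ i * (1 - x) ^ (n - i) * (n.choose i : ℝ))
    (fun i _ => by positivity) hmem
  calc (n.choose k : ℝ) * x ^ k * (1 - x) ^ (n - k)
      = x ^ k * (1 - x) ^ (n - k) * (n.choose k : ℝ) := by ring
    _ ≤ ∑ m ∈ Finset.range (n + 1), x ^ m * (1 - x) ^ (n - m) * (n.choose m : ℝ) := hb
    _ = 1 := h.symm

lemma choose_le_exp (γ a k : ℕ) (hγ : 1 ≤ γ) (ha1 : 1 ≤ a) (hak : a ≤ k) (hkγ : k ≤ γ) :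
    (γ.choose k : ℝ) ≤ Real.exp ((γ : ℝ) * binH (max ((a : ℝ) / (γ : ℝ)) (1 / 2))) := by
  set x : ℝ := max ((a : ℝ) / (γ : ℝ)) (1 / 2) with hxdef
  have hγ0 : (0 : ℝ) < (γ : ℝ) := by exact_mod_cast hγ
  by_cases haγ : a = γ
  · -- then k = γ, choose = 1, x = 1, binH 1 = 0
    have hk : k = γ := le_antisymm hkγ (haγ ▸ hak)
    have hx1 : x = 1 := by
      rw [hxdef, haγ, div_self hγ0.ne']
      norm_num
    rw [hk, Nat.choose_self, hx1]
    simp [binH]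
  · have haγ' : a < γ := lt_of_le_of_ne (le_trans hak hkγ) haγ
    have hx_half : (1 / 2 : ℝ) ≤ x := le_max_right _ _
    have hx0 : (0 : ℝ) < x := by linarith
    have hx1 : x < 1 := by
      rw [hxdef]
      apply max_lt _ (by norm_num)
      rw [div_lt_one hγ0]
      exact_mod_cast haγ'
    have h1x : (0 : ℝ) < 1 - x := by linarith
    -- exponent nonneg fact
    have hkey : 0 ≤ ((k : ℝ) - (γ : ℝ) * x) * (Real.log x - Real.log (1 - x)) := by
      rcases le_total ((a : ℝ) / (γ : ℝ)) (1 / 2) with hc | hc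
      · have : x = 1 / 2 := by rw [hxdef, max_eq_right hc]
        rw [this]
        norm_num
      · have hxe : x = (a : ℝ) / (γ : ℝ) := by rw [hxdef, max_eq_left hc]
        apply mul_nonneg
        · rw [hxe, mul_div_cancel₀ _ hγ0.ne']
          have : (a : ℝ) ≤ (k : ℝ) := by exact_mod_cast hak
          linarith
        · have : 1 - x ≤ x := by linarith
          linarith [Real.log_le_log h1x this]
    have hprod : (0 : ℝ) < x ^ k * (1 - x) ^ (γ - k) := by positivity
    have hcast : ((γ - k : ℕ) : ℝ) = (γ : ℝ) - (k : ℝ) := by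
      exact Nat.cast_sub hkγ
    have he1 : Real.exp ((k : ℝ) * Real.log x) = x ^ k := by
      rw [Real.exp_nat_mul, Real.exp_log hx0]
    have he2 : Real.exp (((γ : ℝ) - (k : ℝ)) * Real.log (1 - x)) = (1 - x) ^ (γ - k) := by
      rw [← hcast, Real.exp_nat_mul, Real.exp_log h1x]
    have hexp : Real.exp ((γ : ℝ) * binH x) * (x ^ k * (1 - x) ^ (γ - k))
        = Real.exp ((γ : ℝ) * binH x + (k : ℝ) * Real.log x
            + ((γ : ℝ) - (k : ℝ)) * Real.log (1 - x)) := by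
      rw [Real.exp_add, Real.exp_add, he1, he2]
      ring
    have hge1 : (1 : ℝ) ≤ Real.exp ((γ : ℝ) * binH x) * (x ^ k * (1 - x) ^ (γ - k)) := by
      rw [hexp]
      rw [show (γ : ℝ) * binH x + (k : ℝ) * Real.log x + ((γ : ℝ) - (k : ℝ)) * Real.log (1 - x)
        = ((k : ℝ) - (γ : ℝ) * x) * (Real.log x - Real.log (1 - x)) by rw [binH]; ring]
      exact Real.one_le_exp hkey
    have hle1 := choose_mul_le_one γ k hkγ x hx0.le hx1.le
    have : (γ.choose k : ℝ) * (x ^ k * (1 - x) ^ (γ - k))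
        ≤ Real.exp ((γ : ℝ) * binH x) * (x ^ k * (1 - x) ^ (γ - k)) := by
      calc (γ.choose k : ℝ) * (x ^ k * (1 - x) ^ (γ - k)) ≤ 1 := by
            rw [← mul_assoc]; exact hle1
        _ ≤ _ := hge1
    exact le_of_mul_le_mul_right this hprod

/-- Binomial tail bound used in the collision analysis: for `Binomial(γ, p)` and
`α = a/γ`, `P(X ≥ a) ≤ exp(γ·H(max{α,1/2}))·p^a/(1−p)`. -/
theorem binomial_tail_entropy_bound
    (γ : ℕ) (hγ : 1 ≤ γ) (p : ℝ) (hp : 0 < p ∧ p < 1)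
    (a : ℕ) (ha : 1 ≤ a ∧ a ≤ γ) :
    ∑ k ∈ Finset.Icc a γ, (γ.choose k : ℝ) * p ^ k * (1 - p) ^ (γ - k)
      ≤ Real.exp ((γ : ℝ) * binH (max ((a : ℝ) / (γ : ℝ)) (1 / 2))) * p ^ a / (1 - p) := by
  obtain ⟨hp0, hp1⟩ := hp
  obtain ⟨ha1, haγ⟩ := ha
  set E : ℝ := Real.exp ((γ : ℝ) * binH (max ((a : ℝ) / (γ : ℝ)) (1 / 2))) with hE
  have hE0 : 0 < E := Real.exp_pos _
  have h1p : (0 : ℝ) < 1 - p := by linarith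
  have step1 : ∑ k ∈ Finset.Icc a γ, (γ.choose k : ℝ) * p ^ k * (1 - p) ^ (γ - k)
      ≤ ∑ k ∈ Finset.Icc a γ, E * p ^ k := by
    apply Finset.sum_le_sum
    intro k hk
    rw [Finset.mem_Icc] at hk
    have hc := choose_le_exp γ a k hγ ha1 hk.1 hk.2
    have hpow : (1 - p) ^ (γ - k) ≤ 1 :=
      pow_le_one₀ h1p.le (by linarith)
    calc (γ.choose k : ℝ) * p ^ k * (1 - p) ^ (γ - k)
        ≤ (γ.choose k : ℝ) * p ^ k * 1 := by
          apply mul_le_mul_of_nonneg_left hpow (by positivity)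
      _ = (γ.choose k : ℝ) * p ^ k := by ring
      _ ≤ E * p ^ k := by
          apply mul_le_mul_of_nonneg_right hc (by positivity)
  have step2 : ∑ k ∈ Finset.Icc a γ, E * p ^ k ≤ E * p ^ a / (1 - p) := by
    rw [← Finset.mul_sum]
    have hsum : ∑ k ∈ Finset.Icc a γ, p ^ k ≤ p ^ a / (1 - p) := by
      have hre : ∑ k ∈ Finset.Icc a γ, p ^ k
          = p ^ a * ∑ j ∈ Finset.range (γ + 1 - a), p ^ j := by
        rw [Finset.mul_sum, ← Finset.Ico_add_one_right_eq_Icc, Finset.sum_Ico_eq_sum_range]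
        apply Finset.sum_congr rfl
        intro j _
        rw [← pow_add]
      rw [hre]
      have hgeom : ∑ j ∈ Finset.range (γ + 1 - a), p ^ j ≤ 1 / (1 - p) := by
        rw [geom_sum_eq hp1.ne, ← neg_div_neg_eq, neg_sub, neg_sub]
        have : 0 ≤ p ^ (γ + 1 - a) := by positivity
        gcongr
        linarith
      calc p ^ a * ∑ j ∈ Finset.range (γ + 1 - a), p ^ j
          ≤ p ^ a * (1 / (1 - p)) := by
            apply mul_le_mul_of_nonneg_left hgeom (by positivity)
        _ = p ^ a / (1 - p) := by ring
    calc E * ∑ k ∈ Finset.Icc a γ, p ^ k ≤ E * (p ^ a / (1 - p)) :=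
          mul_le_mul_of_nonneg_left hsum hE0.le
      _ = E * p ^ a / (1 - p) := by ring
  exact le_trans step1 step2
end

section
/- Let β ∈ (0,1), and let d ≥ 1 and B ≥ 1 be integers with d ≤ β·B. Place d balls independently and uniformly at random into B bins, and let D be the number of nonempty bins. Then P(D ≥ d·(1 − √β)) ≥ 1 − √β. -/
open Finset

lemma aux_deficiency {d B : ℕ} (ω : Fin d → Fin B) :
    d ≤ (Finset.univ.image ω).card +
      ((Finset.univ : Finset (Fin d × Fin d)).filter
        (fun p => p.1 < p.2 ∧ ω p.1 = ω p.2)).card := by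
  classical
  set S : Finset (Fin d) := univ.filter (fun j => ∀ i, i < j → ω i ≠ ω j) with hS
  have h1 : S.card ≤ (Finset.univ.image ω).card := by
    have hinj : Set.InjOn ω S := by
      intro a ha b hb hab
      by_contra hne
      rcases lt_or_gt_of_ne hne with h | h
      · exact (mem_filter.mp hb).2 a h hab
      · exact (mem_filter.mp ha).2 b h hab.symm
    calc S.card = (S.image ω).card := (card_image_of_injOn hinj).symm
      _ ≤ (Finset.univ.image ω).card := card_le_card (image_subset_image (subset_univ S))
  have h2 : (univ.filter (fun j => ¬ ∀ i, i < j → ω i ≠ ω j)).card ≤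
      ((Finset.univ : Finset (Fin d × Fin d)).filter
        (fun p => p.1 < p.2 ∧ ω p.1 = ω p.2)).card := by
    apply card_le_card_of_injOn
      (fun j => (if h : ∃ i, i < j ∧ ω i = ω j then h.choose else j, j))
    · intro j hj
      simp only [mem_coe, mem_filter, mem_univ, true_and] at hj
      push_neg at hj
      obtain ⟨i, hi, he⟩ := hj
      have hex : ∃ i, i < j ∧ ω i = ω j := ⟨i, hi, he⟩
      simp only [dif_pos hex, mem_coe, mem_filter, mem_univ, true_and]
      exact hex.choose_spec
    · intro a _ b _ hab
      simpa using congrArg Prod.snd hab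
  have hsplit : S.card + (univ.filter (fun j => ¬ ∀ i, i < j → ω i ≠ ω j)).card = d := by
    rw [hS, card_filter_add_card_filter_not, card_univ, Fintype.card_fin]
  omega

lemma aux_count {d B : ℕ} {i j : Fin d} (hij : i ≠ j) :
    ((Finset.univ : Finset (Fin d → Fin B)).filter (fun ω => ω i = ω j)).card = B ^ (d - 1) := by
  classical
  rw [← Fintype.card_subtype]
  have e : {ω : Fin d → Fin B // ω i = ω j} ≃ ({k : Fin d // k ≠ j} → Fin B) :=
    { toFun := fun ω k => ω.1 k
      invFun := fun g => ⟨fun k => if hk : k = j then g ⟨i, hij⟩ else g ⟨k, hk⟩, by simp [hij]⟩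
      left_inv := fun ⟨ω, h⟩ => by
        ext k
        by_cases hk : k = j
        · subst hk; simp [h]
        · simp [hk]
      right_inv := fun g => by
        ext k
        simp [k.2] }
  rw [Fintype.card_congr e, Fintype.card_fun, Fintype.card_fin]
  congr 1
  have : Fintype.card {k : Fin d // k ≠ j} = Fintype.card (Fin d) - Fintype.card {k : Fin d // k = j} :=
    Fintype.card_subtype_compl _
  rw [this, Fintype.card_subtype_eq, Fintype.card_fin]

lemma aux_sum {d B : ℕ} :
    ∑ ω : Fin d → Fin B, ((Finset.univ : Finset (Fin d × Fin d)).filter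
        (fun p => p.1 < p.2 ∧ ω p.1 = ω p.2)).card ≤ d * d * B ^ (d - 1) := by
  classical
  have h1 : ∀ ω : Fin d → Fin B,
      ((Finset.univ : Finset (Fin d × Fin d)).filter
        (fun p => p.1 < p.2 ∧ ω p.1 = ω p.2)).card
      = ∑ p ∈ univ.filter (fun p : Fin d × Fin d => p.1 < p.2),
          (if ω p.1 = ω p.2 then 1 else 0) := by
    intro ω
    rw [← filter_filter, card_filter]
  calc ∑ ω : Fin d → Fin B, ((Finset.univ : Finset (Fin d × Fin d)).filter
        (fun p => p.1 < p.2 ∧ ω p.1 = ω p.2)).card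
      = ∑ p ∈ univ.filter (fun p : Fin d × Fin d => p.1 < p.2),
          ∑ ω : Fin d → Fin B, (if ω p.1 = ω p.2 then 1 else 0) := by
        simp_rw [h1]; rw [Finset.sum_comm]
    _ = ∑ p ∈ univ.filter (fun p : Fin d × Fin d => p.1 < p.2), B ^ (d - 1) := by
        apply Finset.sum_congr rfl
        intro p hp
        rw [← card_filter]
        exact aux_count (ne_of_lt (mem_filter.mp hp).2)
    _ ≤ d * d * B ^ (d - 1) := by
        rw [Finset.sum_const, smul_eq_mul]
        apply Nat.mul_le_mul_right
        calc (univ.filter (fun p : Fin d × Fin d => p.1 < p.2)).card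
            ≤ (univ : Finset (Fin d × Fin d)).card := card_filter_le _ _
          _ = d * d := by simp

/-- Binning method, overestimation guarantee: placing `d ≤ β·B` balls
independently and uniformly at random into `B` bins, the number `D` of nonempty
bins satisfies `P(D ≥ d·(1 − √β)) ≥ 1 − √β`. -/
theorem nonempty_bins_lower_bound
    (β : ℝ) (hβ : 0 < β ∧ β < 1)
    (d B : ℕ) (hd : 1 ≤ d) (hB : 1 ≤ B) (hdB : (d : ℝ) ≤ β * (B : ℝ)) :
    1 - Real.sqrt β ≤
      (((Finset.univ : Finset (Fin d → Fin B)).filter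
          (fun ω => (d : ℝ) * (1 - Real.sqrt β) ≤ ((Finset.univ.image ω).card : ℝ))).card : ℝ)
        / (B : ℝ) ^ d := by
  classical
  obtain ⟨hβ0, hβ1⟩ := hβ
  have hs0 : 0 < Real.sqrt β := Real.sqrt_pos.mpr hβ0
  have hsq : Real.sqrt β * Real.sqrt β = β := Real.mul_self_sqrt hβ0.le
  have hs1 : Real.sqrt β ≤ 1 := by nlinarith
  set P : (Fin d → Fin B) → Prop :=
    fun ω => (d : ℝ) * (1 - Real.sqrt β) ≤ ((Finset.univ.image ω).card : ℝ) with hP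
  set G : Finset (Fin d → Fin B) := univ.filter P with hG
  set Bd : Finset (Fin d → Fin B) := univ.filter (fun ω => ¬ P ω) with hBd
  have hBpos : (0 : ℝ) < (B : ℝ) := by exact_mod_cast hB
  have hBdpos : (0 : ℝ) < (B : ℝ) ^ d := pow_pos hBpos d
  have hdpos : (0 : ℝ) < (d : ℝ) := by exact_mod_cast hd
  -- split of the space
  have hsplit : G.card + Bd.card = B ^ d := by
    rw [hG, hBd, card_filter_add_card_filter_not, card_univ]
    simp [Fintype.card_fun]
  -- Markov step
  have hmark : (Bd.card : ℝ) * ((d : ℝ) * Real.sqrt β) ≤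
      ∑ ω ∈ Bd, (((Finset.univ : Finset (Fin d × Fin d)).filter
        (fun p => p.1 < p.2 ∧ ω p.1 = ω p.2)).card : ℝ) := by
    have := Finset.card_nsmul_le_sum Bd
      (fun ω => (((Finset.univ : Finset (Fin d × Fin d)).filter
        (fun p => p.1 < p.2 ∧ ω p.1 = ω p.2)).card : ℝ))
      ((d : ℝ) * Real.sqrt β) ?_
    · simpa [nsmul_eq_mul] using this
    · intro ω hω
      have hmem := mem_filter.mp hω
      have hlt : ((Finset.univ.image ω).card : ℝ) < (d : ℝ) * (1 - Real.sqrt β) :=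
        lt_of_not_ge hmem.2
      have hdef := aux_deficiency ω
      have hdef' : (d : ℝ) ≤ ((Finset.univ.image ω).card : ℝ) +
          (((Finset.univ : Finset (Fin d × Fin d)).filter
            (fun p => p.1 < p.2 ∧ ω p.1 = ω p.2)).card : ℝ) := by
        exact_mod_cast hdef
      nlinarith
  have htot : ∑ ω ∈ Bd, (((Finset.univ : Finset (Fin d × Fin d)).filter
        (fun p => p.1 < p.2 ∧ ω p.1 = ω p.2)).card : ℝ)
      ≤ (d : ℝ) * (d : ℝ) * (B : ℝ) ^ (d - 1) := by
    calc ∑ ω ∈ Bd, (((Finset.univ : Finset (Fin d × Fin d)).filter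
          (fun p => p.1 < p.2 ∧ ω p.1 = ω p.2)).card : ℝ)
        ≤ ∑ ω : Fin d → Fin B, (((Finset.univ : Finset (Fin d × Fin d)).filter
          (fun p => p.1 < p.2 ∧ ω p.1 = ω p.2)).card : ℝ) := by
          apply Finset.sum_le_sum_of_subset_of_nonneg (subset_univ Bd)
          intro ω _ _
          positivity
      _ ≤ (d : ℝ) * (d : ℝ) * (B : ℝ) ^ (d - 1) := by
          rw [← Nat.cast_sum]
          have := aux_sum (d := d) (B := B)
          exact_mod_cast this
  -- combine: Bd.card ≤ √β * B^d
  have hpow : (B : ℝ) ^ (d - 1) * (B : ℝ) = (B : ℝ) ^ d := by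
    rw [← pow_succ]
    congr 1
    omega
  have hbound : (Bd.card : ℝ) ≤ Real.sqrt β * (B : ℝ) ^ d := by
    have h1 : (Bd.card : ℝ) * ((d : ℝ) * Real.sqrt β) ≤
        (d : ℝ) * (β * (B : ℝ)) * (B : ℝ) ^ (d - 1) := by
      have : (d : ℝ) * (d : ℝ) * (B : ℝ) ^ (d - 1) ≤
          (d : ℝ) * (β * (B : ℝ)) * (B : ℝ) ^ (d - 1) := by
        apply mul_le_mul_of_nonneg_right _ (by positivity)
        exact mul_le_mul_of_nonneg_left hdB hdpos.le
      linarith [hmark.trans htot]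
    have h2 : (d : ℝ) * (β * (B : ℝ)) * (B : ℝ) ^ (d - 1) =
        (d : ℝ) * Real.sqrt β * (Real.sqrt β * (B : ℝ) ^ d) := by
      conv_lhs => rw [← hsq]
      rw [← hpow]; ring
    rw [h2] at h1
    have h3 : (Bd.card : ℝ) * ((d : ℝ) * Real.sqrt β) ≤
        Real.sqrt β * (B : ℝ) ^ d * ((d : ℝ) * Real.sqrt β) := by
      calc (Bd.card : ℝ) * ((d : ℝ) * Real.sqrt β) ≤ _ := h1
        _ = Real.sqrt β * (B : ℝ) ^ d * ((d : ℝ) * Real.sqrt β) := by ring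
    exact le_of_mul_le_mul_right h3 (by positivity)
  -- finish
  rw [le_div_iff₀ hBdpos]
  have hGcard : (G.card : ℝ) = (B : ℝ) ^ d - (Bd.card : ℝ) := by
    have : (G.card : ℝ) + (Bd.card : ℝ) = ((B ^ d : ℕ) : ℝ) := by exact_mod_cast hsplit
    push_cast at this
    linarith
  rw [hGcard]
  nlinarith
end
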